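/- arXiv:0806.0463 — 4 statements merged into one kernel-verified Lean document; each statement's English description precedes it below -/
import Mathlib

section
/- Let Y be a Young diagram and S a set of m distinct removable boxes of Y. Call a box s ∈ Y irrelevant (with respect to S) if the topmost box of the column of s belongs to S and the rightmost box of the row of s belongs to S. Then the number of irrelevant boxes of Y is exactly m(m+1)/2. -/
open scoped Classical

/-- The removable boxes of a Young diagram `Y`. -/
noncomputable def YoungDiagram.removables (Y : YoungDiagram) : Finset (ℕ × ℕ) :=
  Y.cells.filter fun c => (c.1 + 1, c.2) ∉ Y ∧ (c.1, c.2 + 1) ∉ Y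

/-- A box of `Y` is irrelevant w.r.t. a set `S` of marked removable boxes if both the
last box of its column and the last box of its row are marked. -/
noncomputable def irrelevantCells (Y : YoungDiagram) (S : Finset (ℕ × ℕ)) :
    Finset (ℕ × ℕ) :=
  Y.cells.filter fun c => (Y.colLen c.2 - 1, c.2) ∈ S ∧ (c.1, Y.rowLen c.1 - 1) ∈ S

/-!
An irrelevant box `c` is determined by the pair `(s, t)` of marked boxes ending its row and
its column: `c = (s.1, t.2)`, and `c` lies in the column of `t` weakly above `t`, so
`s.1 ≤ t.1`. Conversely every such pair gives the irrelevant box `(s.1, t.2)`. Since removable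
boxes lie in distinct rows, the pairs with `s.1 ≤ t.1` correspond to unordered pairs of marked
boxes, of which there are `m(m+1)/2`.
-/

namespace YoungDiagram

variable {Y : YoungDiagram} {c d : ℕ × ℕ}

theorem mem_of_mem_removables (hc : c ∈ Y.removables) : c ∈ Y :=
  (Finset.mem_filter.mp hc).1

theorem rowLen_eq_of_mem_removables (hc : c ∈ Y.removables) : Y.rowLen c.1 = c.2 + 1 := by
  obtain ⟨hcY, -, hright⟩ := Finset.mem_filter.mp hc
  have hlt : c.2 < Y.rowLen c.1 := mem_iff_lt_rowLen.mp hcY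
  have hge : ¬ c.2 + 1 < Y.rowLen c.1 := fun h => hright (mem_iff_lt_rowLen.mpr h)
  omega

theorem colLen_eq_of_mem_removables (hc : c ∈ Y.removables) : Y.colLen c.2 = c.1 + 1 := by
  obtain ⟨hcY, habove, -⟩ := Finset.mem_filter.mp hc
  have hlt : c.1 < Y.colLen c.2 := mem_iff_lt_colLen.mp hcY
  have hge : ¬ c.1 + 1 < Y.colLen c.2 := fun h => habove (mem_iff_lt_colLen.mpr h)
  omega

theorem eq_of_mem_removables_of_fst_eq (hc : c ∈ Y.removables) (hd : d ∈ Y.removables)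
    (h : c.1 = d.1) : c = d := by
  have hc' := rowLen_eq_of_mem_removables hc
  have hd' := rowLen_eq_of_mem_removables hd
  rw [h] at hc'
  exact Prod.ext h (by omega)

theorem eq_of_mem_removables_of_snd_eq (hc : c ∈ Y.removables) (hd : d ∈ Y.removables)
    (h : c.2 = d.2) : c = d := by
  have hc' := colLen_eq_of_mem_removables hc
  have hd' := colLen_eq_of_mem_removables hd
  rw [h] at hc'
  exact Prod.ext (by omega) h

end YoungDiagram

open YoungDiagram

theorem Finset.card_product_filter_le_of_injOn {α β : Type*} [LinearOrder β] (S : Finset α)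
    {f : α → β} (hf : Set.InjOn f S) :
    ((S ×ˢ S).filter fun p => f p.1 ≤ f p.2).card = S.card * (S.card + 1) / 2 := by
  have hsym2 : ((S ×ˢ S).filter fun p => f p.1 ≤ f p.2).card = S.sym2.card := by
    refine Finset.card_bij (fun (p : α × α) _ => s(p.1, p.2)) ?_ ?_ ?_
    · intro p hp
      simp only [Finset.mem_filter, Finset.mem_product] at hp
      exact Finset.mk_mem_sym2_iff.mpr hp.1
    · rintro ⟨a, b⟩ hab ⟨c, d⟩ hcd heq
      simp only [Finset.mem_filter, Finset.mem_product] at hab hcd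
      rcases Sym2.mk_eq_mk_iff.mp heq with h | h
      · exact h
      · obtain ⟨rfl, rfl⟩ := Prod.ext_iff.mp h
        have hab_eq : a = b := hf hab.1.1 hab.1.2 (le_antisymm hab.2 hcd.2)
        rw [hab_eq]
    · intro z hz
      induction z using Sym2.ind with
      | _ a b =>
        obtain ⟨ha, hb⟩ := Finset.mk_mem_sym2_iff.mp hz
        rcases le_total (f a) (f b) with h | h
        · exact ⟨(a, b), by simp [ha, hb, h], rfl⟩
        · exact ⟨(b, a), by simp [ha, hb, h], Sym2.eq_swap⟩
  rw [hsym2, Finset.card_sym2, Nat.choose_two_right, Nat.add_sub_cancel, Nat.mul_comm]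

theorem irrelevantCells_eq_image {Y : YoungDiagram} {S : Finset (ℕ × ℕ)}
    (hS : S ⊆ Y.removables) :
    irrelevantCells Y S =
      ((S ×ˢ S).filter fun p => p.1.1 ≤ p.2.1).image fun p => (p.1.1, p.2.2) := by
  ext c
  simp only [irrelevantCells, Finset.mem_filter, Finset.mem_image, Finset.mem_product,
    mem_cells, Prod.exists]
  constructor
  · rintro ⟨hcY, hcol, hrow⟩
    have hc : c.1 < Y.colLen c.2 := mem_iff_lt_colLen.mp hcY
    exact ⟨_, _, _, _, ⟨⟨hrow, hcol⟩, by omega⟩, rfl⟩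
  · rintro ⟨s₁, s₂, t₁, t₂, ⟨⟨hs, ht⟩, hle⟩, rfl⟩
    have hrow := rowLen_eq_of_mem_removables (hS hs)
    have hcol := colLen_eq_of_mem_removables (hS ht)
    simp only at hrow hcol
    refine ⟨Y.up_left_mem hle le_rfl (mem_of_mem_removables (hS ht)), ?_, ?_⟩
    · rwa [hcol, Nat.add_sub_cancel]
    · rwa [hrow, Nat.add_sub_cancel]

/-- If `S` is a set of `m` removable boxes of a Young diagram `Y`, then the number of
irrelevant boxes of `Y` with respect to `S` is exactly `m(m+1)/2`. -/
theorem card_irrelevantCells (Y : YoungDiagram) (m : ℕ) (S : Finset (ℕ × ℕ))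
    (hS : S ⊆ Y.removables) (hm : S.card = m) :
    (irrelevantCells Y S).card = m * (m + 1) / 2 := by
  have hinj : Set.InjOn (fun p : (ℕ × ℕ) × (ℕ × ℕ) => (p.1.1, p.2.2))
      ((S ×ˢ S).filter fun p => p.1.1 ≤ p.2.1) := by
    intro p hp q hq heq
    simp only [Finset.coe_filter, Finset.mem_product, Set.mem_ofPred_eq] at hp hq
    obtain ⟨h₁, h₂⟩ := Prod.ext_iff.mp heq
    exact Prod.ext (eq_of_mem_removables_of_fst_eq (hS hp.1.1) (hS hq.1.1) h₁)
      (eq_of_mem_removables_of_snd_eq (hS hp.1.2) (hS hq.1.2) h₂)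
  have hrows : Set.InjOn Prod.fst (S : Set (ℕ × ℕ)) := fun s hs t ht =>
    eq_of_mem_removables_of_fst_eq (hS hs) (hS ht)
  rw [irrelevantCells_eq_image hS, Finset.card_image_of_injOn hinj,
    Finset.card_product_filter_le_of_injOn S hrows, hm]
end

section
/- Fix nonnegative integers m and N. There is a bijection between the set A of pairs (Y,S), where Y is a Young diagram, S is a set of m removable boxes of Y, and |Y| − m(m+1)/2 = N, and the set B of pairs (Y¹,Y²) of Young diagrams such that Y² has at most m columns and |Y¹| + |Y²| = N. The bijection sends (Y,S) to (Y¹,Y²) where Y¹ consists of the columns of Y not containing a marked box, and Y² is obtained from the remaining columns of Y by deleting from the i-th marked column (ordered by decreasing length) its top i boxes. -/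
/-!
Read a Young diagram as the multiset of its row lengths (Mathlib's rows are the paper's columns,
so "at most `m` columns" is `colLen 0 ≤ m`). A removable box is the last box of the last row of a
given length, so a set `S` of `m` removable boxes of `Y` is the same as a set `L` of `m` distinct
row lengths of `Y`. Deleting one row of each length in `L` leaves `Y¹`. Listing `L` decreasingly
and subtracting the staircase `(m, m - 1, …, 1)` gives the row lengths of `Y²`, which has at most
`m` rows and `|Y²| = ∑ L - m(m+1)/2`. Conversely, adding the staircase back to the padded row
lengths of `Y²` recovers `L`.
-/

open scoped Classical

open Finset

theorem Multiset.sup_mem_of_ne_zero {α : Type*} [LinearOrder α] [OrderBot α] {s : Multiset α}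
    (hs : s ≠ 0) : s.sup ∈ s := by
  induction s using Multiset.induction_on with
  | empty => exact absurd rfl hs
  | cons a s ih =>
    rw [Multiset.sup_cons]
    rcases eq_or_ne s 0 with rfl | hs'
    · simp
    · rcases max_choice a s.sup with h | h <;> rw [h]
      · exact Multiset.mem_cons_self a s
      · exact Multiset.mem_cons_of_mem (ih hs')

theorem Finset.sup_id_mem {α : Type*} [LinearOrder α] [OrderBot α] {s : Finset α}
    (hs : s.Nonempty) : s.sup id ∈ s := by
  simpa using sup_mem_of_nonempty (f := id) hs

theorem Finset.sup_id_erase_lt {α : Type*} [LinearOrder α] [OrderBot α] {s : Finset α}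
    (hs : ⊥ < s.sup id) : (s.erase (s.sup id)).sup id < s.sup id :=
  (Finset.sup_lt_iff hs).2 fun _ hy =>
    lt_of_le_of_ne (le_sup (f := id) (mem_of_mem_erase hy)) (ne_of_mem_erase hy)

theorem Finset.card_le_sup_id {s : Finset ℕ} (hs : ∀ x ∈ s, 0 < x) : s.card ≤ s.sup id :=
  calc s.card ≤ (Icc 1 (s.sup id)).card :=
        card_le_card fun x hx => mem_Icc.2 ⟨hs x hx, le_sup (f := id) hx⟩
    _ = s.sup id := by simp

theorem Finset.image_image_of_leftInvOn {α β : Type*} [DecidableEq α] [DecidableEq β]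
    {f : α → β} {g : β → α} {s : Finset α} (h : Set.LeftInvOn g f s) :
    (s.image f).image g = s := by
  rw [image_image]
  exact (image_congr h).trans image_id

def Equiv.subtypeProdSubtypeSndEquiv {α β : Type*} {q : β → Prop} {r : α → β → Prop} :
    {p : α × {b // q b} // r p.1 p.2} ≃ {p : α × β // q p.2 ∧ r p.1 p.2} where
  toFun p := ⟨(p.1.1, p.1.2), p.1.2.2, p.2⟩
  invFun p := ⟨(p.1.1, ⟨p.1.2, p.2.1⟩), p.2.2⟩

/-- `{ν₁ ≥ ν₂ ≥ … ≥ νₘ} ↦ {ν₁ + m, ν₂ + (m - 1), …, νₘ + 1}` -/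
noncomputable def addStaircase : ℕ → Multiset ℕ → Finset ℕ
  | 0, _ => ∅
  | m + 1, ν => insert (ν.sup + (m + 1)) (addStaircase m (ν.erase ν.sup))

noncomputable def subStaircase : ℕ → Finset ℕ → Multiset ℕ
  | 0, _ => 0
  | m + 1, L => (L.sup id - (m + 1)) ::ₘ subStaircase m (L.erase (L.sup id))

theorem le_sup_add_of_mem_addStaircase {m : ℕ} {ν : Multiset ℕ} {x : ℕ}
    (hx : x ∈ addStaircase m ν) : x ≤ ν.sup + m := by
  induction m generalizing ν with
  | zero => simp [addStaircase] at hx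
  | succ m ih =>
    rw [addStaircase, mem_insert] at hx
    have := Multiset.sup_mono (Multiset.erase_subset ν.sup ν)
    rcases hx with rfl | hx
    · rfl
    · have := ih hx
      omega

theorem sup_add_notMem_addStaircase (m : ℕ) (ν : Multiset ℕ) :
    ν.sup + (m + 1) ∉ addStaircase m (ν.erase ν.sup) := fun h => by
  have := le_sup_add_of_mem_addStaircase h
  have := Multiset.sup_mono (Multiset.erase_subset ν.sup ν)
  omega

theorem pos_of_mem_addStaircase {m : ℕ} {ν : Multiset ℕ} {x : ℕ} (hx : x ∈ addStaircase m ν) :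
    0 < x := by
  induction m generalizing ν with
  | zero => simp [addStaircase] at hx
  | succ m ih =>
    rw [addStaircase, mem_insert] at hx
    rcases hx with rfl | hx
    · omega
    · exact ih hx

theorem card_addStaircase (m : ℕ) (ν : Multiset ℕ) : (addStaircase m ν).card = m := by
  induction m generalizing ν with
  | zero => rfl
  | succ m ih => rw [addStaircase, card_insert_of_notMem (sup_add_notMem_addStaircase m ν), ih]

theorem card_subStaircase (m : ℕ) (L : Finset ℕ) : Multiset.card (subStaircase m L) = m := by
  induction m generalizing L with
  | zero => rfl
  | succ m ih => rw [subStaircase, Multiset.card_cons, ih]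

theorem sum_addStaircase {m : ℕ} {ν : Multiset ℕ} (hν : Multiset.card ν = m) :
    (addStaircase m ν).sum id = ν.sum + ∑ i ∈ range (m + 1), i := by
  induction m generalizing ν with
  | zero => simp [addStaircase, Multiset.card_eq_zero.1 hν]
  | succ m ih =>
    have hsup := Multiset.sup_mem_of_ne_zero (Multiset.card_pos.1 (by omega : 0 < Multiset.card ν))
    rw [addStaircase, sum_insert (sup_add_notMem_addStaircase m ν),
      ih (by rw [Multiset.card_erase_of_mem hsup, hν]; rfl), sum_range_succ _ (m + 1),
      ← Multiset.sum_erase hsup, id]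
    omega

theorem subStaircase_addStaircase {m : ℕ} {ν : Multiset ℕ} (hν : Multiset.card ν = m) :
    subStaircase m (addStaircase m ν) = ν := by
  induction m generalizing ν with
  | zero => simp [subStaircase, Multiset.card_eq_zero.1 hν]
  | succ m ih =>
    have hsup := Multiset.sup_mem_of_ne_zero (Multiset.card_pos.1 (by omega : 0 < Multiset.card ν))
    have hmax : (addStaircase (m + 1) ν).sup id = ν.sup + (m + 1) :=
      le_antisymm (Finset.sup_le fun x hx => le_sup_add_of_mem_addStaircase hx)
        (le_sup (f := id) (mem_insert_self _ _))
    rw [subStaircase, hmax, addStaircase, erase_insert (sup_add_notMem_addStaircase m ν),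
      Nat.add_sub_cancel, ih (by rw [Multiset.card_erase_of_mem hsup, hν]; rfl),
      Multiset.cons_erase hsup]

theorem add_le_sup_of_mem_subStaircase {m : ℕ} {L : Finset ℕ} (hL : ∀ x ∈ L, 0 < x)
    (hcard : L.card = m) {x : ℕ} (hx : x ∈ subStaircase m L) : x + m ≤ L.sup id := by
  induction m generalizing L with
  | zero => simp [subStaircase] at hx
  | succ m ih =>
    have hm := hcard ▸ card_le_sup_id hL
    rw [subStaircase, Multiset.mem_cons] at hx
    rcases hx with rfl | hx
    · omega
    · have hlt := sup_id_erase_lt (s := L) (by rw [bot_eq_zero]; omega)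
      have := ih (fun y hy => hL y (mem_of_mem_erase hy))
        (by rw [card_erase_of_mem (sup_id_mem (card_pos.1 (by omega))), hcard]; rfl) hx
      omega

theorem addStaircase_subStaircase {m : ℕ} {L : Finset ℕ} (hL : ∀ x ∈ L, 0 < x)
    (hcard : L.card = m) : addStaircase m (subStaircase m L) = L := by
  induction m generalizing L with
  | zero => simp [addStaircase, card_eq_zero.1 hcard]
  | succ m ih =>
    have hm := hcard ▸ card_le_sup_id hL
    have ha := sup_id_mem (card_pos.1 (by omega : 0 < L.card))
    have hL' : ∀ y ∈ L.erase (L.sup id), 0 < y := fun y hy => hL y (mem_of_mem_erase hy)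
    have hcard' : (L.erase (L.sup id)).card = m := by rw [card_erase_of_mem ha, hcard]; rfl
    have hmax : (subStaircase (m + 1) L).sup = L.sup id - (m + 1) := by
      rw [subStaircase, Multiset.sup_cons, sup_eq_left, Multiset.sup_le]
      intro x hx
      have := add_le_sup_of_mem_subStaircase hL' hcard' hx
      have := sup_id_erase_lt (s := L) (by rw [bot_eq_zero]; omega)
      omega
    rw [addStaircase, hmax, Nat.sub_add_cancel hm, subStaircase, Multiset.erase_cons_head,
      ih hL' hcard', insert_erase ha]

noncomputable def addStaircaseEquiv (m : ℕ) :
    {ν : Multiset ℕ // Multiset.card ν = m} ≃ {L : Finset ℕ // (∀ x ∈ L, 0 < x) ∧ L.card = m} where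
  toFun ν := ⟨addStaircase m ν, fun _ => pos_of_mem_addStaircase, card_addStaircase m ν⟩
  invFun L := ⟨subStaircase m L, card_subStaircase m L⟩
  left_inv ν := Subtype.ext (subStaircase_addStaircase ν.2)
  right_inv L := Subtype.ext (addStaircase_subStaircase L.2.1 L.2.2)

def padZerosEquiv (m : ℕ) :
    {ν : Multiset ℕ // (∀ x ∈ ν, 0 < x) ∧ Multiset.card ν ≤ m} ≃
      {ν : Multiset ℕ // Multiset.card ν = m} where
  toFun ν := ⟨ν.1 + Multiset.replicate (m - Multiset.card ν.1) 0, by simp [ν.2.2]⟩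
  invFun ν := ⟨ν.1.filter (0 < ·), fun _ hx => (Multiset.mem_filter.1 hx).2,
    (Multiset.card_le_card (Multiset.filter_le _ _)).trans ν.2.le⟩
  left_inv ν := Subtype.ext <| by
    simp [Multiset.filter_add, Multiset.filter_eq_self.2 ν.2.1, Multiset.filter_eq_nil,
      Multiset.mem_replicate]
  right_inv ν := Subtype.ext <| by
    have hsplit := Multiset.filter_add_not (0 < ·) ν.1
    have hcard := congrArg Multiset.card hsplit
    rw [Multiset.card_add, ν.2] at hcard
    dsimp only
    conv_rhs => rw [← hsplit]
    congr 1
    rw [eq_comm, Multiset.eq_replicate]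
    exact ⟨by omega, fun b hb => by simpa using (Multiset.mem_filter.1 hb).2⟩

namespace YoungDiagram

theorem sum_rowLens (Y : YoungDiagram) : Y.rowLens.sum = Y.card := by
  have hrow : ∀ c ∈ Y.cells, c.1 ∈ range (Y.colLen 0) := fun c hc => by
    rw [mem_range, ← mem_iff_lt_colLen]
    exact Y.up_left_mem le_rfl (Nat.zero_le _) hc
  rw [YoungDiagram.card, card_eq_sum_card_fiberwise hrow, sum_eq_multiset_sum]
  simp only [rowLens, range_val, Multiset.range, Multiset.map_coe, Multiset.sum_coe]
  congr 1
  exact List.map_congr_left fun i _ => Y.rowLen_eq_card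

theorem mem_rowLens {Y : YoungDiagram} {ℓ : ℕ} :
    ℓ ∈ Y.rowLens ↔ ∃ i < Y.colLen 0, Y.rowLen i = ℓ := by
  simp [rowLens]

def equivRowLensMultiset : YoungDiagram ≃ {μ : Multiset ℕ // ∀ x ∈ μ, 0 < x} :=
  equivListRowLens.trans
    { toFun w := ⟨w.1, w.2.2⟩
      invFun μ := ⟨μ.1.sort (· ≥ ·), (Multiset.pairwise_sort _ _).sortedGE, by simpa using μ.2⟩
      left_inv w := Subtype.ext (List.mergeSort_eq_self _ w.2.1.pairwise)
      right_inv μ := Subtype.ext (Multiset.sort_eq _ _) }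

theorem mem_removables {Y : YoungDiagram} {c : ℕ × ℕ} :
    c ∈ Y.removables ↔ Y.rowLen c.1 = c.2 + 1 ∧ Y.colLen c.2 = c.1 + 1 := by
  obtain ⟨i, j⟩ := c
  have hij : j < Y.rowLen i ↔ i < Y.colLen j := mem_iff_lt_rowLen.symm.trans mem_iff_lt_colLen
  rw [removables, mem_filter, mem_cells, mem_iff_lt_rowLen, mem_iff_lt_colLen,
    mem_iff_lt_rowLen]
  dsimp only
  omega

/-- The last box of the last row of length `ℓ`. -/
def removableOfRowLen (Y : YoungDiagram) (ℓ : ℕ) : ℕ × ℕ := (Y.colLen (ℓ - 1) - 1, ℓ - 1)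

theorem mapsTo_succ_snd_removables (Y : YoungDiagram) :
    Set.MapsTo (·.2 + 1) (Y.removables : Set (ℕ × ℕ)) (Y.rowLens.toFinset : Set ℕ) := fun c hc => by
  rw [Finset.mem_coe, mem_removables] at hc
  have := Y.colLen_anti 0 c.2 (Nat.zero_le _)
  exact List.mem_toFinset.2 (mem_rowLens.2 ⟨c.1, by omega, hc.1⟩)

theorem mapsTo_removableOfRowLen (Y : YoungDiagram) :
    Set.MapsTo Y.removableOfRowLen (Y.rowLens.toFinset : Set ℕ) (Y.removables : Set (ℕ × ℕ)) := by
  intro ℓ hℓ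
  rw [Finset.mem_coe, List.mem_toFinset] at hℓ
  obtain ⟨i, hi, rfl⟩ := mem_rowLens.1 hℓ
  have hpos := Y.pos_of_mem_rowLens _ hℓ
  have hcol : i < Y.colLen (Y.rowLen i - 1) := by
    rw [← mem_iff_lt_colLen, mem_iff_lt_rowLen]; omega
  have hlast : Y.rowLen i - 1 < Y.rowLen (Y.colLen (Y.rowLen i - 1) - 1) := by
    rw [← mem_iff_lt_rowLen, mem_iff_lt_colLen]; omega
  have := Y.rowLen_anti i (Y.colLen (Y.rowLen i - 1) - 1) (by omega)
  rw [Finset.mem_coe, mem_removables, removableOfRowLen]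
  dsimp only
  omega

theorem leftInvOn_removableOfRowLen (Y : YoungDiagram) :
    Set.LeftInvOn Y.removableOfRowLen (·.2 + 1) (Y.removables : Set (ℕ × ℕ)) := fun c hc => by
  rw [Finset.mem_coe, mem_removables] at hc
  simp [removableOfRowLen, hc.2]

theorem leftInvOn_succ_snd (Y : YoungDiagram) :
    Set.LeftInvOn (·.2 + 1) Y.removableOfRowLen (Y.rowLens.toFinset : Set ℕ) := fun _ hℓ =>
  Nat.sub_add_cancel (Y.pos_of_mem_rowLens _ (List.mem_toFinset.1 hℓ))

theorem sum_equivRowLensMultiset (Y : YoungDiagram) : (equivRowLensMultiset Y).1.sum = Y.card :=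
  Y.sum_rowLens

noncomputable def staircaseEquiv (m : ℕ) :
    {Y : YoungDiagram // Y.colLen 0 ≤ m} ≃ {L : Finset ℕ // (∀ x ∈ L, 0 < x) ∧ L.card = m} :=
  ((equivRowLensMultiset.subtypeEquiv (q := fun μ => Multiset.card μ.1 ≤ m) fun Y => by
      rw [← length_rowLens]; rfl).trans
        (Equiv.subtypeSubtypeEquivSubtypeInter (fun μ => ∀ x ∈ μ, 0 < x)
          (fun μ => Multiset.card μ ≤ m))).trans
    ((padZerosEquiv m).trans (addStaircaseEquiv m))

theorem sum_staircaseEquiv {m : ℕ} (Y : {Y : YoungDiagram // Y.colLen 0 ≤ m}) :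
    (staircaseEquiv m Y).1.sum id = Y.1.card + m * (m + 1) / 2 := by
  show (addStaircase m _).sum id = _
  rw [sum_addStaircase (padZerosEquiv m _).2, Finset.sum_range_id, Nat.add_sub_cancel, Nat.mul_comm]
  show ((Y.1.rowLens : Multiset ℕ) + Multiset.replicate _ 0).sum + _ = _
  rw [Multiset.sum_add, Multiset.sum_replicate, smul_zero, add_zero, Multiset.sum_coe, sum_rowLens]

end YoungDiagram

open YoungDiagram

noncomputable def removablesEquivRowLens (m k : ℕ) :
    {p : YoungDiagram × Finset (ℕ × ℕ) // p.2 ⊆ p.1.removables ∧ p.2.card = m ∧ p.1.card = k} ≃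
      {p : YoungDiagram × Finset ℕ //
        p.2 ⊆ p.1.rowLens.toFinset ∧ p.2.card = m ∧ p.1.card = k} where
  toFun p := ⟨(p.1.1, p.1.2.image (·.2 + 1)),
    image_subset_iff.2 fun _ hc => p.1.1.mapsTo_succ_snd_removables (p.2.1 hc),
    by rw [card_image_of_injOn ((leftInvOn_removableOfRowLen _).injOn.mono (coe_subset.2 p.2.1)),
      p.2.2.1],
    p.2.2.2⟩
  invFun p := ⟨(p.1.1, p.1.2.image p.1.1.removableOfRowLen),
    image_subset_iff.2 fun _ hℓ => p.1.1.mapsTo_removableOfRowLen (p.2.1 hℓ),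
    by rw [card_image_of_injOn ((leftInvOn_succ_snd _).injOn.mono (coe_subset.2 p.2.1)), p.2.2.1],
    p.2.2.2⟩
  left_inv p := Subtype.ext <| Prod.ext rfl <|
    image_image_of_leftInvOn ((leftInvOn_removableOfRowLen _).mono (coe_subset.2 p.2.1))
  right_inv p := Subtype.ext <| Prod.ext rfl <|
    image_image_of_leftInvOn ((leftInvOn_succ_snd _).mono (coe_subset.2 p.2.1))

def rowLensEquivMultiset (m k : ℕ) :
    {p : YoungDiagram × Finset ℕ // p.2 ⊆ p.1.rowLens.toFinset ∧ p.2.card = m ∧ p.1.card = k} ≃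
      {p : {μ : Multiset ℕ // ∀ x ∈ μ, 0 < x} × Finset ℕ //
        p.2.val ≤ p.1.1 ∧ p.2.card = m ∧ p.1.1.sum = k} :=
  Equiv.subtypeEquiv (equivRowLensMultiset.prodCongr (Equiv.refl _)) fun p => by
    rw [Equiv.prodCongr_apply, Prod.map_fst, Prod.map_snd, Equiv.refl_apply,
      sum_equivRowLensMultiset, Multiset.le_iff_subset p.2.nodup]
    simp [equivRowLensMultiset, Finset.subset_iff, Multiset.subset_iff]

def splitRowLensEquiv (m k : ℕ) :
    {p : {μ : Multiset ℕ // ∀ x ∈ μ, 0 < x} × Finset ℕ //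
        p.2.val ≤ p.1.1 ∧ p.2.card = m ∧ p.1.1.sum = k} ≃
      {p : {μ : Multiset ℕ // ∀ x ∈ μ, 0 < x} × {L : Finset ℕ // (∀ x ∈ L, 0 < x) ∧ L.card = m} //
        p.1.1.sum + p.2.1.sum id = k} where
  toFun p := ⟨(⟨p.1.1.1 - p.1.2.val, fun x hx => p.1.1.2 x (Multiset.mem_of_le tsub_le_self hx)⟩,
    ⟨p.1.2, fun x hx => p.1.1.2 x (Multiset.mem_of_le p.2.1 hx), p.2.2.1⟩), by
      rw [← sum_val, ← Multiset.sum_add, tsub_add_cancel_of_le p.2.1, p.2.2.2]⟩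
  invFun p := ⟨(⟨p.1.1.1 + p.1.2.1.val, fun x hx => (Multiset.mem_add.1 hx).elim (p.1.1.2 x)
    (p.1.2.2.1 x)⟩, p.1.2.1), le_add_self, p.1.2.2.2, by rw [Multiset.sum_add, sum_val, p.2]⟩
  left_inv p := Subtype.ext <| Prod.ext (Subtype.ext (tsub_add_cancel_of_le p.2.1)) rfl
  right_inv p := Subtype.ext <| Prod.ext (Subtype.ext (add_tsub_cancel_right _ _)) rfl

noncomputable def pairsEquiv (m N : ℕ) :
    {p : {μ : Multiset ℕ // ∀ x ∈ μ, 0 < x} × {L : Finset ℕ // (∀ x ∈ L, 0 < x) ∧ L.card = m} //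
        p.1.1.sum + p.2.1.sum id = N + m * (m + 1) / 2} ≃
      {p : YoungDiagram × YoungDiagram // p.2.colLen 0 ≤ m ∧ p.1.card + p.2.card = N} :=
  (Equiv.subtypeEquiv (equivRowLensMultiset.symm.prodCongr (staircaseEquiv m).symm)
    fun p => by
      rw [Equiv.prodCongr_apply, Prod.map_fst, Prod.map_snd]
      conv_lhs => rw [← equivRowLensMultiset.apply_symm_apply p.1,
        ← (staircaseEquiv m).apply_symm_apply p.2, sum_equivRowLensMultiset,
        sum_staircaseEquiv]
      omega).trans
    (Equiv.subtypeProdSubtypeSndEquiv (q := fun Y : YoungDiagram => Y.colLen 0 ≤ m)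
      (r := fun Y₁ Y₂ : YoungDiagram => Y₁.card + Y₂.card = N))

/-- There is a bijection between the set `A` of pairs `(Y,S)` of a Young diagram `Y`
together with a set `S` of `m` removable boxes of `Y` with `|Y| - m(m+1)/2 = N`,
and the set `B` of pairs `(Y¹,Y²)` of Young diagrams such that `Y²` has at most `m`
columns and `|Y¹| + |Y²| = N`. -/
theorem bijection_marked_diagrams_pairs (m N : ℕ) :
    Nonempty
      ({p : YoungDiagram × Finset (ℕ × ℕ) //
          p.2 ⊆ p.1.removables ∧ p.2.card = m ∧ p.1.card = N + m * (m + 1) / 2} ≃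
        {p : YoungDiagram × YoungDiagram //
          p.2.colLen 0 ≤ m ∧ p.1.card + p.2.card = N}) :=
  ⟨(removablesEquivRowLens m _).trans <| (rowLensEquivMultiset m _).trans <|
    (splitRowLensEquiv m _).trans <| pairsEquiv m N⟩
end

section
/- As an identity of formal power series in q over the ring ℤ[t], for every m ≥ 0: the sum over all pairs of partitions (Y¹, Y²) such that Y² has at most m columns, of t^{2(|Y¹|+|Y²|−l(Y¹))} q^{|Y¹|+|Y²|}, equals the product (∏_{d=1}^{∞} 1/(1 − t^{2d−2} q^{d})) · (∏_{d=1}^{m} 1/(1 − t^{2d} q^{d})). -/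
/-!
Expanding each geometric factor `1/(1 - t^{a d} q^d) = ∑_k t^{k a d} q^{k d}`, the coefficient of
`q^n` in `∏_{d ∈ s} 1/(1 - t^{a d} q^d)` is the sum over the partitions `Y` of `n` with parts in
`s` of `t^{∑_{y ∈ Y} a y}`. For `a d = 2d - 2` this weight is `t^{2(|Y| - #Y)}`, where `#Y` is the
number of parts, and for `a d = 2d` it is `t^{2|Y|}`. Transposing Young diagrams is an involution
on the partitions of `n` that exchanges the number of parts with the largest part, so the sum of
`t^{2(N - #Y¹)}` over `Y¹` equals that of `t^{2(N - l(Y¹))}`.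
-/

open scoped Classical

/-- The inverse power series `1/(1 - t^a q^d)` in `ℤ[t][[q]]`, where `t` is the
polynomial variable and `q` the power series variable. -/
noncomputable def invFac (a d : ℕ) : PowerSeries (Polynomial ℤ) :=
  PowerSeries.invOfUnit
    (1 - PowerSeries.C (R := Polynomial ℤ) (Polynomial.X ^ a) * PowerSeries.X ^ d) 1

open Finset PowerSeries

@[to_additive]
theorem Finset.prod_multiset_map_count_of_subset {ι M : Type*} [DecidableEq ι] [CommMonoid M]
    (t : Multiset ι) {s : Finset ι} (hs : t.toFinset ⊆ s) (f : ι → M) :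
    (t.map f).prod = ∏ i ∈ s, f i ^ t.count i := by
  rw [prod_multiset_map_count]
  exact prod_subset hs fun i _ hi => by rw [Multiset.count_eq_zero.2 (by simpa using hi), pow_zero]

theorem Multiset.prod_map_pow_eq_pow_sum {ι M : Type*} [CommMonoid M] (t : Multiset ι)
    (f : ι → ℕ) (x : M) : (t.map fun i => x ^ f i).prod = x ^ (t.map f).sum := by
  induction t using Multiset.induction_on with
  | empty => simp
  | cons a t ih => simp [ih, pow_add]

namespace YoungDiagram

theorem card_cellsOfRowLens (w : List ℕ) : (YoungDiagram.cellsOfRowLens w).card = w.sum := by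
  induction w with
  | nil => rfl
  | cons w ws ih =>
    rw [YoungDiagram.cellsOfRowLens, card_union_of_disjoint, card_product, card_map, ih]
    · simp
    · simp [disjoint_left]

theorem card_eq_sum_rowLens (μ : YoungDiagram) : μ.card = μ.rowLens.sum := by
  conv_lhs => rw [← ofRowLens_to_rowLens_eq_self (μ := μ)]
  exact card_cellsOfRowLens _

theorem card_transpose (μ : YoungDiagram) : μ.transpose.card = μ.card :=
  card_map _

theorem sup_rowLens (μ : YoungDiagram) : (μ.rowLens : Multiset ℕ).sup = μ.rowLen 0 := by
  refine le_antisymm (Multiset.sup_le.2 fun x hx => ?_) ?_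
  · obtain ⟨i, -, rfl⟩ := List.mem_map.1 hx
    exact μ.rowLen_anti 0 i (Nat.zero_le i)
  · rcases (μ.rowLen 0).eq_zero_or_pos with h | h
    · rw [h]; exact Nat.zero_le _
    · refine Multiset.le_sup (Multiset.mem_coe.2 (List.mem_map.2 ⟨0, ?_, rfl⟩))
      rwa [List.mem_range, ← mem_iff_lt_colLen, mem_iff_lt_rowLen]

end YoungDiagram

namespace Nat.Partition

variable {n : ℕ} {s : Finset ℕ}

def equivYoungDiagram : n.Partition ≃ {μ : YoungDiagram // μ.card = n} where
  toFun Y := ⟨.ofRowLens (Y.parts.sort (· ≥ ·)) (Multiset.pairwise_sort _ _).sortedGE,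
    (YoungDiagram.card_cellsOfRowLens _).trans <| by
      rw [← Multiset.sum_coe, Multiset.sort_eq, Y.parts_sum]⟩
  invFun μ := ⟨μ.1.rowLens, fun hx => μ.1.pos_of_mem_rowLens _ hx, by
    rw [Multiset.sum_coe, ← YoungDiagram.card_eq_sum_rowLens, μ.2]⟩
  left_inv Y := by
    ext1
    dsimp only
    rw [YoungDiagram.rowLens_ofRowLens_eq_self, Multiset.sort_eq]
    intro x hx
    exact Y.parts_pos (by simpa using hx)
  right_inv μ := by
    ext1
    dsimp only
    conv_rhs => rw [← YoungDiagram.ofRowLens_to_rowLens_eq_self (μ := μ.1)]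
    congr 1
    exact List.mergeSort_eq_self _ μ.1.rowLens_sorted.pairwise

@[simp]
theorem parts_equivYoungDiagram_symm (μ : {μ : YoungDiagram // μ.card = n}) :
    (equivYoungDiagram.symm μ).parts = μ.1.rowLens :=
  rfl

def transpose (Y : n.Partition) : n.Partition :=
  equivYoungDiagram.symm ⟨(equivYoungDiagram Y).1.transpose,
    (YoungDiagram.card_transpose _).trans (equivYoungDiagram Y).2⟩

theorem transpose_involutive : Function.Involutive (transpose (n := n)) := by
  intro Y
  simp [transpose]

theorem card_parts_transpose (Y : n.Partition) :
    Multiset.card Y.transpose.parts = Y.parts.sup := by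
  calc Multiset.card Y.transpose.parts = (equivYoungDiagram Y).1.rowLen 0 := by simp [transpose]
    _ = (equivYoungDiagram.symm (equivYoungDiagram Y)).parts.sup := by
      rw [parts_equivYoungDiagram_symm, YoungDiagram.sup_rowLens]
    _ = Y.parts.sup := by rw [Equiv.symm_apply_apply]

theorem sum_comp_sup_parts_eq_sum_comp_card_parts {M : Type*} [AddCommMonoid M] (g : ℕ → M) :
    ∑ Y : n.Partition, g Y.parts.sup = ∑ Y : n.Partition, g (Multiset.card Y.parts) := by
  simp_rw [← card_parts_transpose]
  exact Equiv.sum_comp (transpose_involutive.toPerm _) fun Y : n.Partition =>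
    g (Multiset.card Y.parts)

theorem sum_map_pred_parts_add_card (Y : n.Partition) :
    (Y.parts.map (· - 1)).sum + Multiset.card Y.parts = n := by
  have h : (Y.parts.map fun d => d - 1 + 1).sum = n := by
    rw [Multiset.map_congr rfl fun d hd => Nat.sub_add_cancel (Y.parts_pos hd), Multiset.map_id',
      Y.parts_sum]
  rwa [Multiset.sum_map_add, Multiset.map_const', Multiset.sum_replicate, smul_eq_mul,
    mul_one] at h

theorem restricted_eq_univ {p : ℕ → Prop} [DecidablePred p] (hp : ∀ d, 0 < d → d ≤ n → p d) :
    restricted n p = univ :=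
  filter_true_of_mem fun Y _ d hd => hp d (Y.parts_pos hd) (le_of_mem_parts hd)

theorem restricted_mem_Icc_one_eq_filter_sup_le (m : ℕ) :
    restricted n (· ∈ Icc 1 m) = univ.filter fun Y => Y.parts.sup ≤ m := by
  refine filter_congr fun Y _ => ?_
  simp only [mem_Icc, Multiset.sup_le]
  exact forall₂_congr fun d hd => and_iff_right (Y.parts_pos hd)

theorem toFinsuppAntidiag_mem_finsuppAntidiag_of_mem_restricted {Y : n.Partition}
    (hY : Y ∈ restricted n (· ∈ s)) : Y.toFinsuppAntidiag ∈ s.finsuppAntidiag n := by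
  have hsub : Y.parts.toFinset ⊆ s := fun d hd => (mem_filter.1 hY).2 d (by simpa using hd)
  refine mem_finsuppAntidiag.2 ⟨?_, hsub⟩
  have := Finset.sum_multiset_map_count_of_subset Y.parts hsub id
  rw [Multiset.map_id, Y.parts_sum] at this
  exact this.symm

theorem exists_mem_restricted_toFinsuppAntidiag_eq (hs : 0 ∉ s) {g : ℕ →₀ ℕ}
    (hg : g ∈ s.finsuppAntidiag n) (hdvd : ∀ d ∈ s, d ∣ g d) :
    ∃ Y ∈ restricted n (· ∈ s), Y.toFinsuppAntidiag = g := by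
  obtain ⟨hsum, hsupp⟩ := mem_finsuppAntidiag.1 hg
  have hcount (e : ℕ) : (∑ d ∈ s, Multiset.replicate (g d / d) d).count e =
      if e ∈ s then g e / e else 0 := by
    simp [Multiset.count_sum', Multiset.count_replicate]
  refine ⟨⟨∑ d ∈ s, Multiset.replicate (g d / d) d, fun {e} he => ?_, ?_⟩, ?_, ?_⟩
  · obtain ⟨d, hd, he⟩ := Multiset.mem_sum.1 he
    rw [Multiset.eq_of_mem_replicate he]
    exact Nat.pos_of_ne_zero fun h => hs (h ▸ hd)
  · rw [Multiset.sum_sum, ← hsum]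
    refine sum_congr rfl fun d hd => ?_
    rw [Multiset.sum_replicate, smul_eq_mul, Nat.div_mul_cancel (hdvd d hd)]
  · refine mem_filter.2 ⟨mem_univ _, fun e he => ?_⟩
    obtain ⟨d, hd, he⟩ := Multiset.mem_sum.1 he
    rwa [Multiset.eq_of_mem_replicate he]
  · ext e
    show Multiset.count e _ * e = g e
    rw [hcount]
    split_ifs with he
    · exact Nat.div_mul_cancel (hdvd e he)
    · rw [Finsupp.notMem_support_iff.1 fun h => he (hsupp h), zero_mul]

end Nat.Partition

namespace PowerSeries

variable {R : Type*} [CommRing R]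

theorem invOfUnit_one_sub_C_mul_X_pow (c : R) {d : ℕ} (hd : d ≠ 0) :
    invOfUnit (1 - C c * X ^ d) 1 = mk fun n => if d ∣ n then c ^ (n / d) else 0 := by
  set G : R⟦X⟧ := mk fun n => if d ∣ n then c ^ (n / d) else 0
  have hG : G = expand d hd (rescale c (mk 1)) := by
    ext n
    simp [G, coeff_expand, coeff_rescale]
  have hu : 1 - C c * X ^ d = expand d hd (rescale c (1 - X)) := by
    simp [rescale_X, expand_C]
  have hGu : G * (1 - C c * X ^ d) = 1 := by
    rw [hG, hu, ← map_mul, ← map_mul, mk_one_mul_one_sub_eq_one, map_one, map_one]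
  calc invOfUnit (1 - C c * X ^ d) 1
      = G * (1 - C c * X ^ d) * invOfUnit (1 - C c * X ^ d) 1 := by rw [hGu, one_mul]
    _ = G := by rw [mul_assoc, mul_invOfUnit _ _ (by simp [hd]), mul_one]

theorem coeff_prod_mk_ite_dvd {s : Finset ℕ} (hs : 0 ∉ s) (c : ℕ → R) (n : ℕ) :
    coeff n (∏ d ∈ s, mk fun k => if d ∣ k then c d ^ (k / d) else 0) =
      ∑ Y ∈ Nat.Partition.restricted n (· ∈ s), (Y.parts.map c).prod := by
  rw [coeff_prod]
  symm
  refine sum_of_injOn Nat.Partition.toFinsuppAntidiag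
    (Nat.Partition.toFinsuppAntidiag_injective n).injOn
    (fun Y hY => Nat.Partition.toFinsuppAntidiag_mem_finsuppAntidiag_of_mem_restricted hY)
    (fun g hg hgY => ?_) (fun Y hY => ?_)
  · by_contra hprod
    obtain ⟨Y, hY, rfl⟩ := Nat.Partition.exists_mem_restricted_toFinsuppAntidiag_eq hs hg
      fun d hd => by_contra fun hdvd => hprod (prod_eq_zero hd (by simp [hdvd]))
    exact hgY ⟨Y, hY, rfl⟩
  · have hsub : Y.parts.toFinset ⊆ s := fun d hd => (mem_filter.1 hY).2 d (by simpa using hd)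
    rw [Finset.prod_multiset_map_count_of_subset _ hsub]
    refine prod_congr rfl fun d hd => ?_
    have hd0 : 0 < d := Nat.pos_of_ne_zero fun h => hs (h ▸ hd)
    simp [Nat.Partition.toFinsuppAntidiag, hd0]

end PowerSeries

theorem coeff_prod_invFac {s : Finset ℕ} (hs : 0 ∉ s) (a : ℕ → ℕ) (n : ℕ) :
    coeff n (∏ d ∈ s, invFac (a d) d) =
      ∑ Y ∈ Nat.Partition.restricted n (· ∈ s),
        (Polynomial.X : Polynomial ℤ) ^ (Y.parts.map a).sum := by
  have hfac (d : ℕ) (hd : d ∈ s) :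
      invFac (a d) d =
        PowerSeries.mk fun k => if d ∣ k then (Polynomial.X ^ a d) ^ (k / d) else 0 :=
    invOfUnit_one_sub_C_mul_X_pow _ (ne_of_mem_of_not_mem hd hs)
  rw [prod_congr rfl hfac, coeff_prod_mk_ite_dvd hs]
  simp only [Multiset.prod_map_pow_eq_pow_sum]

theorem coeff_prod_invFac_two_mul_sub_two {n N : ℕ} (hn : n ≤ N) :
    coeff n (∏ d ∈ Icc 1 N, invFac (2 * d - 2) d) =
      ∑ Y : n.Partition, (Polynomial.X : Polynomial ℤ) ^ (2 * (n - Multiset.card Y.parts)) := by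
  rw [coeff_prod_invFac (by simp), Nat.Partition.restricted_eq_univ fun d hd hdn => by
    simp only [mem_Icc]; omega]
  refine sum_congr rfl fun Y _ => ?_
  have h := Y.sum_map_pred_parts_add_card
  rw [show (fun d => 2 * d - 2) = fun d => 2 * (d - 1) by ext d; omega, Multiset.sum_map_mul_left]
  congr 2
  omega

theorem coeff_prod_invFac_two_mul (m n : ℕ) :
    coeff n (∏ d ∈ Icc 1 m, invFac (2 * d) d) =
      ∑ Y : n.Partition,
        if Y.parts.sup ≤ m then (Polynomial.X : Polynomial ℤ) ^ (2 * n) else 0 := by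
  rw [coeff_prod_invFac (by simp), Nat.Partition.restricted_mem_Icc_one_eq_filter_sup_le,
    sum_filter]
  refine sum_congr rfl fun Y _ => ?_
  rw [Multiset.sum_map_mul_left, Multiset.map_id', Y.parts_sum]

/-- For every `m ≥ 0`, as an identity of formal power series in `q` over `ℤ[t]`
(stated coefficientwise; the factors with `d > N` of the first infinite product do not
affect the coefficient of `q^N`): the sum over pairs of partitions `(Y¹,Y²)` with `Y²`
having largest part at most `m` of `t^{2(|Y¹|+|Y²|−l(Y¹))} q^{|Y¹|+|Y²|}` equals
`(∏_{d=1}^{∞} 1/(1 − t^{2d−2} q^{d})) · (∏_{d=1}^{m} 1/(1 − t^{2d} q^{d}))`. -/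
theorem genfun_pairs_eq_product (m N : ℕ) :
    (∑ i ∈ Finset.range (N + 1), ∑ Y1 : Nat.Partition i, ∑ Y2 : Nat.Partition (N - i),
        if Y2.parts.sup ≤ m then
          (Polynomial.X : Polynomial ℤ) ^ (2 * (N - Y1.parts.sup)) else 0) =
      PowerSeries.coeff (R := Polynomial ℤ) N
        ((∏ d ∈ Finset.Icc 1 N, invFac (2 * d - 2) d) *
          ∏ d ∈ Finset.Icc 1 m, invFac (2 * d) d) := by
  rw [coeff_mul, Nat.sum_antidiagonal_eq_sum_range_succ_mk]
  refine sum_congr rfl fun i hi => ?_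
  have hiN : i ≤ N := Nat.lt_succ_iff.1 (mem_range.1 hi)
  rw [coeff_prod_invFac_two_mul_sub_two hiN, coeff_prod_invFac_two_mul, sum_mul_sum,
    Nat.Partition.sum_comp_sup_parts_eq_sum_comp_card_parts fun l => ∑ Y2 : (N - i).Partition,
      if Y2.parts.sup ≤ m then (Polynomial.X : Polynomial ℤ) ^ (2 * (N - l)) else 0]
  refine sum_congr rfl fun Y1 _ => sum_congr rfl fun Y2 _ => ?_
  have h := Y1.sum_map_pred_parts_add_card
  rw [mul_ite, mul_zero, ← pow_add]
  congr 2
  omega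
end

section
/- Let Y be a Young diagram, and let S be a set of m removable boxes of Y. Then the number of relevant boxes s ∈ Y (boxes that are not irrelevant) whose arm length a_Y(s) is positive equals |Y| − m(m−1)/2 − l(Y), where l(Y) is the number of columns of Y. -/
open scoped Classical

/-!
Each row has exactly one box of zero arm, so `|Y| − Y.colLen 0` boxes have positive arm.
An irrelevant box with positive arm is determined by the marked boxes `t` ending its row and `s`
ending its column, and `t.1 < s.1` since otherwise it would be `s` itself, of arm zero.
Conversely, for marked `s, t` with `t.1 < s.1` the box `(t.1, s.2)` is irrelevant with positive
arm, because a removable box lies in a later column than every box of a lower row. Marked boxes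
lie in distinct rows, so there are `m.choose 2` such pairs.
-/

open Finset

theorem Finset.card_product_filter_lt_of_injOn {α β : Type*} [LinearOrder β] {s : Finset α}
    {f : α → β} (hf : Set.InjOn f s) :
    #{x ∈ s ×ˢ s | f x.1 < f x.2} = (#s).choose 2 := by
  rw [← card_image_of_injOn hf, ← card_product_filter_lt]
  refine card_bij (fun x _ => Prod.map f f x) ?_ ?_ ?_
  · intro x hx
    simp only [mem_filter, mem_product] at hx ⊢
    exact ⟨⟨mem_image_of_mem f hx.1.1, mem_image_of_mem f hx.1.2⟩, hx.2⟩
  · intro x hx y hy hxy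
    simp only [mem_filter, mem_product] at hx hy
    obtain ⟨h1, h2⟩ := Prod.ext_iff.1 hxy
    exact Prod.ext (hf hx.1.1 hy.1.1 h1) (hf hx.1.2 hy.1.2 h2)
  · intro y hy
    simp only [mem_filter, mem_product, mem_image] at hy
    obtain ⟨⟨⟨a, ha, hfa⟩, ⟨b, hb, hfb⟩⟩, hlt⟩ := hy
    exact ⟨(a, b), by simp [ha, hb, hfa, hfb, hlt], Prod.ext hfa hfb⟩

namespace YoungDiagram

variable {Y : YoungDiagram} {s t : ℕ × ℕ}

theorem mem_of_mem_removables_s15 (h : s ∈ Y.removables) : s ∈ Y :=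
  (mem_filter.1 h).1

theorem rowLen_eq_of_mem_removables_s15 (h : s ∈ Y.removables) : Y.rowLen s.1 = s.2 + 1 := by
  obtain ⟨i, j⟩ := s
  obtain ⟨hs, -, hright⟩ := mem_filter.1 h
  rw [mem_cells] at hs
  rw [mem_iff_lt_rowLen] at hs hright
  dsimp only at hright ⊢
  omega

theorem colLen_eq_of_mem_removables_s15 (h : s ∈ Y.removables) : Y.colLen s.2 = s.1 + 1 := by
  obtain ⟨i, j⟩ := s
  obtain ⟨hs, hbelow, -⟩ := mem_filter.1 h
  rw [mem_cells] at hs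
  rw [mem_iff_lt_colLen] at hs hbelow
  dsimp only at hbelow ⊢
  omega

theorem injOn_fst_removables : Set.InjOn Prod.fst (Y.removables : Set (ℕ × ℕ)) := by
  intro s hs t ht h
  have hs' := rowLen_eq_of_mem_removables_s15 hs
  have ht' := rowLen_eq_of_mem_removables_s15 ht
  rw [h] at hs'
  exact Prod.ext h (by omega)

theorem snd_lt_of_fst_lt_of_mem_removables (hs : s ∈ Y) (ht : t ∈ Y.removables)
    (h : t.1 < s.1) : s.2 < t.2 := by
  by_contra! hle
  exact (mem_filter.1 ht).2.1 (Y.up_left_mem h hle hs)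

theorem card_filter_row_end (Y : YoungDiagram) :
    #{c ∈ Y.cells | (c.1, c.2 + 1) ∉ Y} = Y.colLen 0 := by
  rw [← card_range (Y.colLen 0)]
  refine card_nbij' Prod.fst (fun i => (i, Y.rowLen i - 1)) ?_ ?_ ?_ ?_
  · rintro ⟨i, j⟩ hc
    rw [mem_coe, mem_filter, mem_cells, mem_iff_lt_colLen] at hc
    have := Y.colLen_anti 0 j j.zero_le
    rw [mem_coe, mem_range]
    omega
  · intro i hi
    rw [mem_coe, mem_range, ← mem_iff_lt_colLen, mem_iff_lt_rowLen] at hi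
    simp only [mem_coe, mem_filter, mem_cells, mem_iff_lt_rowLen]
    omega
  · rintro ⟨i, j⟩ hc
    rw [mem_coe, mem_filter, mem_cells, mem_iff_lt_rowLen, mem_iff_lt_rowLen] at hc
    exact Prod.ext rfl (by dsimp only at hc ⊢; omega)
  · intro i _
    rfl

theorem card_filter_irrelevant_positive_arm {S : Finset (ℕ × ℕ)} (hS : S ⊆ Y.removables) :
    #{c ∈ Y.cells | ((Y.colLen c.2 - 1, c.2) ∈ S ∧ (c.1, Y.rowLen c.1 - 1) ∈ S) ∧
        (c.1, c.2 + 1) ∈ Y} = #{p ∈ S ×ˢ S | p.1.1 < p.2.1} := by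
  refine card_nbij' (fun c => ((c.1, Y.rowLen c.1 - 1), (Y.colLen c.2 - 1, c.2)))
    (fun p => (p.1.1, p.2.2)) ?_ ?_ ?_ ?_
  · rintro ⟨i, j⟩ hc
    simp only [mem_coe, mem_filter, mem_cells] at hc
    obtain ⟨hc, ⟨htop, hend⟩, harm⟩ := hc
    have hrow : Y.rowLen (Y.colLen j - 1) = j + 1 := rowLen_eq_of_mem_removables_s15 (hS htop)
    rw [mem_iff_lt_colLen] at hc
    rw [mem_iff_lt_rowLen] at harm
    have hi : i < Y.colLen j - 1 := by
      by_contra! hle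
      rw [show Y.colLen j - 1 = i by omega] at hrow
      omega
    exact mem_filter.2 ⟨mem_product.2 ⟨hend, htop⟩, hi⟩
  · rintro ⟨t, s⟩ hp
    obtain ⟨⟨ht, hs⟩, hlt⟩ := by simpa only [mem_coe, mem_filter, mem_product] using hp
    have hcol := colLen_eq_of_mem_removables_s15 (hS hs)
    have hrow := rowLen_eq_of_mem_removables_s15 (hS ht)
    have harm := snd_lt_of_fst_lt_of_mem_removables (mem_of_mem_removables_s15 (hS hs)) (hS ht) hlt
    dsimp only
    refine mem_filter.2 ⟨?_, ?_, ?_⟩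
    · rw [mem_cells, mem_iff_lt_colLen, hcol]
      omega
    · simpa only [hcol, hrow, add_tsub_cancel_right] using ⟨hs, ht⟩
    · rw [mem_iff_lt_rowLen, hrow]
      omega
  · intro c _
    rfl
  · rintro ⟨t, s⟩ hp
    obtain ⟨⟨ht, hs⟩, -⟩ := by simpa only [mem_coe, mem_filter, mem_product] using hp
    have hcol := colLen_eq_of_mem_removables_s15 (hS hs)
    have hrow := rowLen_eq_of_mem_removables_s15 (hS ht)
    simp [hcol, hrow]

end YoungDiagram

/-- Let `S` be a set of `m` marked removable boxes of a Young diagram `Y`.  A box is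
irrelevant if both the last box of its column and the last box of its row are marked,
and relevant otherwise.  The number of relevant boxes with positive arm length
(i.e. having a further box after them in their row, `(c.1, c.2+1) ∈ Y`) equals
`|Y| − m(m−1)/2 − l(Y)`, where `l(Y) = colLen 0` is the number of columns of `Y`
(the number of lines transverse to the arm direction); stated additively to avoid
truncated subtraction. -/
theorem card_relevant_positive_arm (Y : YoungDiagram) (m : ℕ) (S : Finset (ℕ × ℕ))
    (hS : S ⊆ Y.removables) (hm : S.card = m) :
    (Y.cells.filter fun c =>
        ¬((Y.colLen c.2 - 1, c.2) ∈ S ∧ (c.1, Y.rowLen c.1 - 1) ∈ S) ∧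
          (c.1, c.2 + 1) ∈ Y).card + m * (m - 1) / 2 + Y.colLen 0 = Y.card := by
  have hrowEnds := card_filter_add_card_filter_not (s := Y.cells) fun c => (c.1, c.2 + 1) ∈ Y
  rw [Y.card_filter_row_end] at hrowEnds
  have hsplit := card_filter_add_card_filter_not (s := {c ∈ Y.cells | (c.1, c.2 + 1) ∈ Y})
    fun c => (Y.colLen c.2 - 1, c.2) ∈ S ∧ (c.1, Y.rowLen c.1 - 1) ∈ S
  simp only [filter_filter, and_comm (a := (_, _ + 1) ∈ Y)] at hsplit
  have hirr : #{c ∈ Y.cells | ((Y.colLen c.2 - 1, c.2) ∈ S ∧ (c.1, Y.rowLen c.1 - 1) ∈ S) ∧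
      (c.1, c.2 + 1) ∈ Y} = m * (m - 1) / 2 := by
    rw [YoungDiagram.card_filter_irrelevant_positive_arm hS,
      card_product_filter_lt_of_injOn (YoungDiagram.injOn_fst_removables.mono (coe_subset.2 hS)),
      hm, Nat.choose_two_right]
  change _ = #Y.cells
  omega
end
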